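/- arXiv:2003.07106 — 2 statements merged into one kernel-verified Lean document; each statement's English description precedes it below -/
import Mathlib

section
/- Let (G,κ) be a capacitated graph with κ(x) ≤ d_G(x) for all x and X ∪ Z independent. If property M*(G,κ) fails — i.e., there exists a nonempty W ⊆ Y^{κ>0} such that the auxiliary bipartite graph G^aux contains a matching from L(W) into W^κ saturating L(W) — then (G,κ) has a DP-Nash subgraph whose D-set contains some vertex of Y (and hence differs from X ∪ Z). -/
open Finset
open scoped Classical

noncomputable section

variable {V : Type*} [Fintype V]

/-- Degree of a vertex in a (simple) graph on a finite vertex set. -/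
def deg (H : SimpleGraph V) (x : V) : ℕ :=
  (Finset.univ.filter fun y => H.Adj x y).card

/-- `(D, P; H)` is a DP-Nash subgraph of the capacitated graph `(G, κ)`:
`H` is a spanning subgraph of `G`, bipartite with partite sets `D` and `P`,
no vertex of `P` is isolated in `H`, and every `x ∈ D` has
`H`-degree `min (d_G x) (κ x)`. -/
def IsDPNash (G : SimpleGraph V) (κ : V → ℕ) (D P : Finset V) (H : SimpleGraph V) : Prop :=
  H ≤ G ∧ D ∪ P = Finset.univ ∧ Disjoint D P ∧
    (∀ ⦃u v⦄, H.Adj u v → (u ∈ D ∧ v ∈ P) ∨ (u ∈ P ∧ v ∈ D)) ∧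
    (∀ v ∈ P, 0 < deg H v) ∧
    (∀ x ∈ D, deg H x = min (deg G x) (κ x))

/-- `X = {x : κ(x) = d_G(x)}`. -/
def XX (G : SimpleGraph V) (κ : V → ℕ) : Finset V :=
  Finset.univ.filter fun x => κ x = deg G x

/-- `Y = N(X) \ X`. -/
def YY (G : SimpleGraph V) (κ : V → ℕ) : Finset V :=
  Finset.univ.filter fun y => y ∉ XX G κ ∧ ∃ x ∈ XX G κ, G.Adj x y

/-- `Z = V \ (X ∪ Y)`. -/
def ZZ (G : SimpleGraph V) (κ : V → ℕ) : Finset V :=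
  Finset.univ \ (XX G κ ∪ YY G κ)

/-- `Y^{κ>0} = {y ∈ Y : κ(y) > 0}`. -/
def Ypos (G : SimpleGraph V) (κ : V → ℕ) : Finset V :=
  (YY G κ).filter fun y => 0 < κ y

/-- The neighbours of `x` in `G` lying in `W`. -/
def nbrW (G : SimpleGraph V) (x : V) (W : Finset V) : Finset V :=
  Finset.univ.filter fun y => G.Adj x y ∧ y ∈ W

/-- `L(W) = {x ∈ X ∪ Z : |N_G(x) ∩ W| > d_G(x) - κ(x)}`. -/
def LL (G : SimpleGraph V) (κ : V → ℕ) (W : Finset V) : Finset V :=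
  (XX G κ ∪ ZZ G κ).filter fun x => deg G x - κ x < (nbrW G x W).card

/-!
Take a witness `T` of minimum size. Minimality gives `κ y + |N(y) ∩ T| ≤ d(y)` for every `y ∈ Y`,
so each `w ∈ T` can claim `κ w` neighbours outside `T`, among them its matched partners in
`L(T)`; the vertices of `X` outside `L(T)` claim all their neighbours, which lie in `Y`. Every
remaining vertex still sees at least `κ` neighbours among the claimed and the remaining vertices,
and such a remainder always carries a DP-Nash subgraph: let one vertex claim `κ` neighbours
(a saturated one if there is any), recurse on the rest with the quotas capped by the degrees
there, and top up the capped quotas from the vertices just claimed.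
-/
section Assignment

variable {G : SimpleGraph V} {κ : V → ℕ}

lemma deg_eq_card_neighborFinset (G : SimpleGraph V) (x : V) :
    deg G x = #(G.neighborFinset x) := by
  simp [deg, SimpleGraph.neighborFinset_eq_filter]

/-- Claims, unlike subgraphs, can be glued along a partition of the vertices; the claimed edges
form the DP-Nash subgraph (`IsDPAssignment.isDPNash`). -/
structure IsDPAssignment (G : SimpleGraph V) (κ : V → ℕ) (D P : Finset V)
    (own : V → Finset V) : Prop where
  disjoint : Disjoint D P
  own_subset : ∀ x ∈ D, own x ⊆ G.neighborFinset x ∩ P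
  card_own : ∀ x ∈ D, #(own x) = κ x
  cover : ∀ p ∈ P, ∃ x ∈ D, p ∈ own x

def claimGraph (D : Finset V) (own : V → Finset V) : SimpleGraph V :=
  SimpleGraph.fromRel fun x p => x ∈ D ∧ p ∈ own x

namespace IsDPAssignment

variable {D P : Finset V} {own : V → Finset V}

lemma adj_of_mem_own (h : IsDPAssignment G κ D P own) {x p : V} (hx : x ∈ D)
    (hp : p ∈ own x) : G.Adj x p :=
  (G.mem_neighborFinset x p).1 (mem_inter.1 (h.own_subset x hx hp)).1

lemma mem_of_mem_own (h : IsDPAssignment G κ D P own) {x p : V} (hx : x ∈ D)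
    (hp : p ∈ own x) : p ∈ P :=
  (mem_inter.1 (h.own_subset x hx hp)).2

lemma claimGraph_adj (h : IsDPAssignment G κ D P own) {u v : V} :
    (claimGraph D own).Adj u v ↔ (u ∈ D ∧ v ∈ own u) ∨ (v ∈ D ∧ u ∈ own v) := by
  rw [claimGraph, SimpleGraph.fromRel_adj, and_iff_right_iff_imp]
  rintro (⟨hu, hv⟩ | ⟨hv, hu⟩)
  · exact (h.adj_of_mem_own hu hv).ne
  · exact (h.adj_of_mem_own hv hu).ne'

lemma filter_claimGraph_adj (h : IsDPAssignment G κ D P own) {x : V} (hx : x ∈ D) :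
    univ.filter ((claimGraph D own).Adj x) = own x := by
  ext p
  simp only [mem_filter, mem_univ, true_and, h.claimGraph_adj]
  refine ⟨?_, fun hp => Or.inl ⟨hx, hp⟩⟩
  rintro (⟨-, hp⟩ | ⟨hp, hxp⟩)
  · exact hp
  · exact absurd (h.mem_of_mem_own hp hxp) (disjoint_left.1 h.disjoint hx)

theorem isDPNash (h : IsDPAssignment G κ D P own) (hDP : D ∪ P = univ) :
    IsDPNash G κ D P (claimGraph D own) := by
  refine ⟨fun u v huv => ?_, hDP, h.disjoint, fun u v huv => ?_, fun p hp => ?_, fun x hx => ?_⟩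
  · rcases h.claimGraph_adj.1 huv with ⟨hu, hv⟩ | ⟨hv, hu⟩
    · exact h.adj_of_mem_own hu hv
    · exact (h.adj_of_mem_own hv hu).symm
  · rcases h.claimGraph_adj.1 huv with ⟨hu, hv⟩ | ⟨hv, hu⟩
    · exact Or.inl ⟨hu, h.mem_of_mem_own hu hv⟩
    · exact Or.inr ⟨h.mem_of_mem_own hv hu, hv⟩
  · obtain ⟨x, hx, hpx⟩ := h.cover p hp
    exact card_pos.2 ⟨x, mem_filter.2 ⟨mem_univ x, h.claimGraph_adj.2 (Or.inr ⟨hx, hpx⟩)⟩⟩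
  · have hκ : κ x ≤ deg G x := by
      rw [← h.card_own x hx, deg_eq_card_neighborFinset]
      exact card_le_card ((h.own_subset x hx).trans inter_subset_left)
    rw [deg, h.filter_claimGraph_adj hx, h.card_own x hx, min_eq_right hκ]

lemma extend {D₀ P₀ D₁ P₁ : Finset V} {own₀ own₁ : V → Finset V}
    (h₀ : IsDPAssignment G κ D₀ P₀ own₀)
    (h₁ : IsDPAssignment G (fun v => min (κ v) #(G.neighborFinset v ∩ (D₁ ∪ P₁))) D₁ P₁ own₁)
    (hdisj : Disjoint (D₀ ∪ P₀) (D₁ ∪ P₁))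
    (hroom : ∀ x ∈ D₁,
      κ x ≤ #(G.neighborFinset x ∩ (D₁ ∪ P₁)) + #(G.neighborFinset x ∩ P₀)) :
    ∃ own, IsDPAssignment G κ (D₀ ∪ D₁) (P₀ ∪ P₁) own := by
  set m : V → ℕ := fun v => min (κ v) #(G.neighborFinset v ∩ (D₁ ∪ P₁))
  have hfill : ∀ x, ∃ F ⊆ G.neighborFinset x ∩ P₀, x ∈ D₁ → #F = κ x - m x := by
    intro x
    by_cases hx : x ∈ D₁
    · have : κ x - m x ≤ #(G.neighborFinset x ∩ P₀) := by
        have := hroom x hx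
        simp only [m]
        omega
      obtain ⟨F, hF, hcard⟩ := exists_subset_card_eq this
      exact ⟨F, hF, fun _ => hcard⟩
    · exact ⟨∅, empty_subset _, fun h => absurd h hx⟩
  choose F hF hFcard using hfill
  obtain ⟨hD₀D₁, hD₀P₁⟩ := disjoint_union_right.1 (disjoint_union_left.1 hdisj).1
  obtain ⟨hP₀D₁, hP₀P₁⟩ := disjoint_union_right.1 (disjoint_union_left.1 hdisj).2
  have hD₁D₀ : ∀ x ∈ D₁, x ∉ D₀ := fun x hx hx₀ => disjoint_left.1 hD₀D₁ hx₀ hx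
  refine ⟨fun x => if x ∈ D₀ then own₀ x else own₁ x ∪ F x, ⟨?_, ?_, ?_, ?_⟩⟩
  · exact disjoint_union_left.2 ⟨disjoint_union_right.2 ⟨h₀.disjoint, hD₀P₁⟩,
      disjoint_union_right.2 ⟨hP₀D₁.symm, h₁.disjoint⟩⟩
  · intro x hx
    by_cases hx₀ : x ∈ D₀
    · simp only [if_pos hx₀]
      exact (h₀.own_subset x hx₀).trans (inter_subset_inter_left subset_union_left)
    · have hx₁ : x ∈ D₁ := (mem_union.1 hx).resolve_left hx₀
      simp only [if_neg hx₀]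
      exact union_subset
        ((h₁.own_subset x hx₁).trans (inter_subset_inter_left subset_union_right))
        ((hF x).trans (inter_subset_inter_left subset_union_left))
  · intro x hx
    by_cases hx₀ : x ∈ D₀
    · simp only [if_pos hx₀]
      exact h₀.card_own x hx₀
    · have hx₁ : x ∈ D₁ := (mem_union.1 hx).resolve_left hx₀
      have hdisjF : Disjoint (own₁ x) (F x) :=
        disjoint_of_subset_left ((h₁.own_subset x hx₁).trans inter_subset_right)
          (disjoint_of_subset_right ((hF x).trans inter_subset_right) hP₀P₁.symm)
      simp only [if_neg hx₀]
      rw [card_union_of_disjoint hdisjF, h₁.card_own x hx₁, hFcard x hx₁]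
      exact Nat.add_sub_of_le (min_le_left _ _)
  · intro p hp
    rcases mem_union.1 hp with hp | hp
    · obtain ⟨x, hx, hpx⟩ := h₀.cover p hp
      exact ⟨x, mem_union_left _ hx, by simpa [hx] using hpx⟩
    · obtain ⟨x, hx, hpx⟩ := h₁.cover p hp
      exact ⟨x, mem_union_right _ hx, by simp [hD₁D₀ x hx, hpx]⟩

end IsDPAssignment

lemma isDPAssignment_star {c : V} {S : Finset V} (hS : S ⊆ G.neighborFinset c)
    (hcard : #S = κ c) : IsDPAssignment G κ {c} S (fun _ => S) where
  disjoint := disjoint_singleton_left.2 fun hc =>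
    G.loopless.irrefl c ((G.mem_neighborFinset c c).1 (hS hc))
  own_subset x hx := by
    rw [mem_singleton.1 hx]
    exact subset_inter hS Subset.rfl
  card_own x hx := by rw [mem_singleton.1 hx, hcard]
  cover p hp := ⟨c, mem_singleton_self c, hp⟩

/-- If some `c` is saturated inside `s`, it claims all its neighbours there and none of them is
left outside `insert c S`; otherwise every vertex of `s` has slack. -/
lemma exists_center {s : Finset V} (hκ : ∀ v ∈ s, κ v ≤ #(G.neighborFinset v ∩ s))
    (hs : s.Nonempty) :
    ∃ c ∈ s, ∃ S ⊆ G.neighborFinset c ∩ s, #S = κ c ∧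
      ∀ x ∈ s \ insert c S, G.Adj x c → κ x < #(G.neighborFinset x ∩ s) := by
  by_cases htight : ∃ c ∈ s, κ c = #(G.neighborFinset c ∩ s)
  · obtain ⟨c, hc, hcard⟩ := htight
    refine ⟨c, hc, _, Subset.rfl, hcard.symm, fun x hx hxc => absurd ?_ (mem_sdiff.1 hx).2⟩
    exact mem_insert_of_mem
      (mem_inter.2 ⟨(G.mem_neighborFinset c x).2 hxc.symm, (mem_sdiff.1 hx).1⟩)
  · push Not at htight
    obtain ⟨c, hc⟩ := hs
    obtain ⟨S, hS, hcard⟩ := exists_subset_card_eq (hκ c hc)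
    exact ⟨c, hc, S, hS, hcard, fun x hx _ =>
      lt_of_le_of_ne (hκ x (mem_sdiff.1 hx).1) (htight x (mem_sdiff.1 hx).1)⟩

theorem exists_isDPAssignment (G : SimpleGraph V) (s : Finset V) (κ : V → ℕ)
    (hκ : ∀ v ∈ s, κ v ≤ #(G.neighborFinset v ∩ s)) :
    ∃ D P own, D ∪ P = s ∧ IsDPAssignment G κ D P own := by
  induction s using Finset.strongInduction generalizing κ with
  | H s ih =>
  rcases s.eq_empty_or_nonempty with rfl | hs
  · exact ⟨∅, ∅, fun _ => ∅, rfl, ⟨disjoint_empty_left _, by simp, by simp, by simp⟩⟩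
  obtain ⟨c, hc, S, hS, hScard, hslack⟩ := exists_center hκ hs
  have hcS : insert c S ⊆ s := insert_subset hc (hS.trans inter_subset_right)
  set r := s \ insert c S with hr
  obtain ⟨D₁, P₁, own₁, hDP₁, h₁⟩ :=
    ih r (sdiff_ssubset hcS (insert_nonempty _ _))
      (fun v => min (κ v) #(G.neighborFinset v ∩ r)) (fun v _ => min_le_right _ _)
  have hroom : ∀ x ∈ r, κ x ≤ #(G.neighborFinset x ∩ r) + #(G.neighborFinset x ∩ S) := by
    intro x hxr
    have hsplit : G.neighborFinset x ∩ s ⊆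
        insert c (G.neighborFinset x ∩ r ∪ G.neighborFinset x ∩ S) := by
      intro y hy
      simp only [hr, mem_insert, mem_union, mem_inter, mem_sdiff] at hy ⊢
      tauto
    have hunion := card_union_le (G.neighborFinset x ∩ r) (G.neighborFinset x ∩ S)
    by_cases hxc : G.Adj x c
    · have := (hslack x hxr hxc).trans_le ((card_le_card hsplit).trans (card_insert_le _ _))
      omega
    · have hsplit' : G.neighborFinset x ∩ s ⊆
          G.neighborFinset x ∩ r ∪ G.neighborFinset x ∩ S := fun y hy =>
        (mem_insert.1 (hsplit hy)).resolve_left fun hyc =>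
          hxc (hyc ▸ (G.mem_neighborFinset x y).1 (mem_inter.1 hy).1)
      have := (hκ x (mem_sdiff.1 hxr).1).trans (card_le_card hsplit')
      omega
  rw [← hDP₁] at h₁ hroom
  obtain ⟨own, h⟩ := (isDPAssignment_star (hS.trans inter_subset_left) hScard).extend h₁
    (by rw [hDP₁, ← insert_eq]; exact disjoint_sdiff)
    (fun x hx => hroom x (mem_union_left _ hx))
  refine ⟨{c} ∪ D₁, S ∪ P₁, own, ?_, h⟩
  rw [union_union_union_comm, hDP₁, ← insert_eq]
  exact union_sdiff_of_subset hcS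

end Assignment

section Witness

variable {G : SimpleGraph V} {κ : V → ℕ}

lemma mem_XX {x : V} : x ∈ XX G κ ↔ κ x = deg G x := by simp [XX]

lemma mem_YY {y : V} : y ∈ YY G κ ↔ y ∉ XX G κ ∧ ∃ x ∈ XX G κ, G.Adj x y := by simp [YY]

lemma mem_ZZ {z : V} : z ∈ ZZ G κ ↔ z ∉ XX G κ ∧ z ∉ YY G κ := by simp [ZZ]

lemma notMem_XX_union_ZZ_of_mem_YY {y : V} (hy : y ∈ YY G κ) : y ∉ XX G κ ∪ ZZ G κ := by
  simp only [mem_union, mem_ZZ, not_or, not_and, not_not]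
  exact ⟨(mem_YY.1 hy).1, fun _ => hy⟩

lemma nbrW_eq_inter (x : V) (W : Finset V) : nbrW G x W = G.neighborFinset x ∩ W := by
  ext; simp [nbrW]

/-- `W` witnesses the failure of `M*(G,κ)`; the copies of `w` in `W^κ` are the pairs `(w, i)`
with `i < κ w`. -/
def IsWitness (G : SimpleGraph V) (κ : V → ℕ) (W : Finset V) : Prop :=
  W.Nonempty ∧ W ⊆ Ypos G κ ∧ ∃ f : V → V × ℕ, Set.InjOn f ↑(LL G κ W) ∧
    ∀ x ∈ LL G κ W, (f x).1 ∈ W ∧ G.Adj x (f x).1 ∧ (f x).2 < κ (f x).1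

lemma IsWitness.subset_YY {W : Finset V} (hW : IsWitness G κ W) : W ⊆ YY G κ :=
  hW.2.1.trans (filter_subset _ _)

lemma LL_singleton_subset (hκ : ∀ v, κ v ≤ deg G v) (y : V) :
    LL G κ {y} ⊆ G.neighborFinset y ∩ XX G κ := by
  intro x hx
  simp only [LL, mem_filter, nbrW_eq_inter] at hx
  obtain ⟨hxXZ, hlt⟩ := hx
  have hle : #(G.neighborFinset x ∩ {y}) ≤ 1 := card_le_one.2 fun a ha b hb => by
    rw [mem_singleton.1 (mem_inter.1 ha).2, mem_singleton.1 (mem_inter.1 hb).2]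
  obtain ⟨a, ha⟩ := card_pos.1 (Nat.zero_lt_of_lt hlt)
  obtain ⟨hax, hay⟩ := mem_inter.1 ha
  rw [mem_singleton.1 hay, G.mem_neighborFinset] at hax
  have hxX : x ∈ XX G κ := by
    refine (mem_union.1 hxXZ).resolve_right fun hxZ => ?_
    have := lt_of_le_of_ne (hκ x) fun h => (mem_ZZ.1 hxZ).1 (mem_XX.2 h)
    omega
  exact mem_inter.2 ⟨(G.mem_neighborFinset y x).2 hax.symm, hxX⟩

lemma isWitness_singleton (hκ : ∀ v, κ v ≤ deg G v) {y : V} (hy : y ∈ YY G κ)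
    (hpos : 0 < κ y) (hcard : #(G.neighborFinset y ∩ XX G κ) ≤ κ y) : IsWitness G κ {y} := by
  set L := LL G κ {y}
  refine ⟨singleton_nonempty y, singleton_subset_iff.2 (mem_filter.2 ⟨hy, hpos⟩),
    fun x => (y, if hx : x ∈ L then (L.equivFin ⟨x, hx⟩ : ℕ) else 0), ?_, fun x hx => ?_⟩
  · intro x₁ hx₁ x₂ hx₂ heq
    simp only [Prod.mk.injEq, true_and] at heq
    rw [dif_pos (mem_coe.1 hx₁), dif_pos (mem_coe.1 hx₂)] at heq
    exact congrArg Subtype.val (L.equivFin.injective (Fin.val_injective heq))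
  · have hxy := (mem_inter.1 (LL_singleton_subset hκ y hx)).1
    refine ⟨mem_singleton_self y, ((G.mem_neighborFinset y x).1 hxy).symm, ?_⟩
    dsimp only
    rw [dif_pos hx]
    exact (L.equivFin ⟨x, hx⟩).2.trans_le
      ((card_le_card (LL_singleton_subset hκ y)).trans hcard)

/-- Otherwise `{y}` would be a witness (its `L` lies in `N(y) ∩ X`), so `|T| ≤ 1`, forcing
`κ y = deg y`. -/
lemma add_card_inter_le_deg_of_isWitness_min (hκ : ∀ v, κ v ≤ deg G v) {T : Finset V}
    (hT : IsWitness G κ T) (hmin : ∀ W, IsWitness G κ W → #T ≤ #W) {y : V}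
    (hy : y ∈ YY G κ) : κ y + #(G.neighborFinset y ∩ T) ≤ deg G y := by
  by_contra hlt
  have hdisj : Disjoint (G.neighborFinset y ∩ XX G κ) (G.neighborFinset y ∩ T) :=
    disjoint_left.2 fun a haX haT =>
      (mem_YY.1 (hT.subset_YY (mem_inter.1 haT).2)).1 (mem_inter.1 haX).2
  have hsum : #(G.neighborFinset y ∩ XX G κ) + #(G.neighborFinset y ∩ T) ≤ deg G y := by
    rw [deg_eq_card_neighborFinset, ← card_union_of_disjoint hdisj]
    exact card_le_card (union_subset inter_subset_left inter_subset_left)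
  have hT1 : #(G.neighborFinset y ∩ T) ≤ 1 :=
    (card_le_card inter_subset_right).trans
      (by simpa using hmin {y} (isWitness_singleton hκ hy (by omega) (by omega)))
  exact (mem_YY.1 hy).1 (mem_XX.2 (le_antisymm (hκ y) (by omega)))

lemma exists_claims_of_isWitness_min (hκ : ∀ v, κ v ≤ deg G v) {T : Finset V}
    (hT : IsWitness G κ T) (hmin : ∀ W, IsWitness G κ W → #T ≤ #W) :
    ∃ S : V → Finset V, (∀ w ∈ T, S w ⊆ G.neighborFinset w \ T ∧ #(S w) = κ w) ∧
      LL G κ T ⊆ T.biUnion S := by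
  obtain ⟨f, hinj, hf⟩ := hT.2.2
  have hclaim : ∀ w ∈ T, ∃ S, (LL G κ T).filter (fun x => (f x).1 = w) ⊆ S ∧
      S ⊆ G.neighborFinset w \ T ∧ #S = κ w := by
    intro w hw
    set Q := (LL G κ T).filter (fun x => (f x).1 = w)
    have hQcard : #Q ≤ κ w := by
      have hmaps : Set.MapsTo (fun x => (f x).2) Q (range (κ w)) := fun x hx => by
        obtain ⟨hxL, hxw⟩ := mem_filter.1 hx
        exact mem_range.2 (hxw ▸ (hf x hxL).2.2)
      have hinjQ : Set.InjOn (fun x => (f x).2) Q := fun x₁ hx₁ x₂ hx₂ heq =>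
        hinj (mem_filter.1 hx₁).1 (mem_filter.1 hx₂).1
          (Prod.ext ((mem_filter.1 hx₁).2.trans (mem_filter.1 hx₂).2.symm) heq)
      simpa using card_le_card_of_injOn _ hmaps hinjQ
    have hQsub : Q ⊆ G.neighborFinset w \ T := by
      intro x hx
      obtain ⟨hxL, hxw⟩ := mem_filter.1 hx
      refine mem_sdiff.2 ⟨(G.mem_neighborFinset w x).2 (hxw ▸ (hf x hxL).2.1).symm, fun hxT => ?_⟩
      exact notMem_XX_union_ZZ_of_mem_YY (hT.subset_YY hxT) (mem_filter.1 hxL).1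
    have hroom : κ w ≤ #(G.neighborFinset w \ T) := by
      have hstab := add_card_inter_le_deg_of_isWitness_min hκ hT hmin (hT.subset_YY hw)
      rw [deg_eq_card_neighborFinset, ← card_inter_add_card_sdiff (G.neighborFinset w) T] at hstab
      omega
    exact exists_subsuperset_card_eq hQsub hQcard hroom
  choose! S hQS hS hcard using hclaim
  refine ⟨S, fun w hw => ⟨hS w hw, hcard w hw⟩, fun x hx => ?_⟩
  exact mem_biUnion.2 ⟨(f x).1, (hf x hx).1, hQS _ (hf x hx).1 (mem_filter.2 ⟨hx, rfl⟩)⟩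

lemma not_adj_of_mem_XX_sdiff_LL {T : Finset V} {a w : V} (ha : a ∈ XX G κ \ LL G κ T)
    (hw : w ∈ T) : ¬ G.Adj a w := fun haw => by
  obtain ⟨haX, haL⟩ := mem_sdiff.1 ha
  refine haL (mem_filter.2 ⟨mem_union_left _ haX, ?_⟩)
  rw [mem_XX.1 haX, Nat.sub_self, nbrW_eq_inter]
  exact card_pos.2 ⟨w, mem_inter.2 ⟨(G.mem_neighborFinset a w).2 haw, hw⟩⟩

lemma isDPAssignment_of_claims
    (hind : ∀ u ∈ XX G κ ∪ ZZ G κ, ∀ v ∈ XX G κ ∪ ZZ G κ, ¬ G.Adj u v)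
    {T : Finset V} (hTY : T ⊆ YY G κ) {S : V → Finset V}
    (hS : ∀ w ∈ T, S w ⊆ G.neighborFinset w \ T ∧ #(S w) = κ w) :
    IsDPAssignment G κ (T ∪ (XX G κ \ LL G κ T))
      (T.biUnion S ∪ (XX G κ \ LL G κ T).biUnion fun a => G.neighborFinset a)
      (fun v => if v ∈ T then S v else G.neighborFinset v) := by
  set A := XX G κ \ LL G κ T
  have hAT : ∀ a ∈ A, a ∉ T := fun a ha haT =>
    notMem_XX_union_ZZ_of_mem_YY (hTY haT) (mem_union_left _ (mem_sdiff.1 ha).1)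
  refine ⟨disjoint_left.2 fun v hvD hvP => ?_, fun x hx => ?_, fun x hx => ?_, fun p hp => ?_⟩
  · simp only [mem_union, mem_biUnion] at hvD hvP
    rcases hvP with ⟨w, hw, hvw⟩ | ⟨a, ha, hva⟩
    · obtain ⟨hwv, hvT⟩ := mem_sdiff.1 ((hS w hw).1 hvw)
      rw [G.mem_neighborFinset] at hwv
      exact hvD.elim hvT fun hvA => not_adj_of_mem_XX_sdiff_LL hvA hw hwv.symm
    · rw [G.mem_neighborFinset] at hva
      refine hvD.elim (fun hvT => not_adj_of_mem_XX_sdiff_LL ha hvT hva) fun hvA => ?_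
      exact hind a (mem_union_left _ (mem_sdiff.1 ha).1) v
        (mem_union_left _ (mem_sdiff.1 hvA).1) hva
  · by_cases hxT : x ∈ T
    · simp only [if_pos hxT]
      exact subset_inter ((hS x hxT).1.trans sdiff_subset)
        ((subset_biUnion_of_mem S hxT).trans subset_union_left)
    · have hxA : x ∈ A := (mem_union.1 hx).resolve_left hxT
      simp only [if_neg hxT]
      exact subset_inter Subset.rfl
        ((subset_biUnion_of_mem (fun a => G.neighborFinset a) hxA).trans subset_union_right)
  · by_cases hxT : x ∈ T
    · simp only [if_pos hxT]
      exact (hS x hxT).2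
    · have hxA : x ∈ A := (mem_union.1 hx).resolve_left hxT
      simp only [if_neg hxT]
      rw [← deg_eq_card_neighborFinset, mem_XX.1 (mem_sdiff.1 hxA).1]
  · simp only [mem_union, mem_biUnion] at hp
    rcases hp with ⟨w, hw, hpw⟩ | ⟨a, ha, hpa⟩
    · exact ⟨w, mem_union_left _ hw, by simpa [hw] using hpw⟩
    · exact ⟨a, mem_union_right _ ha, by simpa [hAT a ha] using hpa⟩

lemma add_card_inter_le_deg_of_notMem_LL (hκ : ∀ v, κ v ≤ deg G v) {T : Finset V}
    (hT : IsWitness G κ T) (hmin : ∀ W, IsWitness G κ W → #T ≤ #W) {x : V}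
    (hxX : x ∉ XX G κ) (hxL : x ∉ LL G κ T) : κ x + #(G.neighborFinset x ∩ T) ≤ deg G x := by
  by_cases hxY : x ∈ YY G κ
  · exact add_card_inter_le_deg_of_isWitness_min hκ hT hmin hxY
  · have hxZ : x ∈ XX G κ ∪ ZZ G κ := mem_union_right _ (mem_ZZ.2 ⟨hxX, hxY⟩)
    have := hκ x
    simp only [LL, mem_filter, hxZ, true_and, not_lt, nbrW_eq_inter] at hxL
    omega

theorem exists_isDPAssignment_of_isWitness_min (hκ : ∀ v, κ v ≤ deg G v)
    (hind : ∀ u ∈ XX G κ ∪ ZZ G κ, ∀ v ∈ XX G κ ∪ ZZ G κ, ¬ G.Adj u v) {T : Finset V}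
    (hT : IsWitness G κ T) (hmin : ∀ W, IsWitness G κ W → #T ≤ #W) :
    ∃ D P own, D ∪ P = univ ∧ T ⊆ D ∧ IsDPAssignment G κ D P own := by
  obtain ⟨S, hS, hL⟩ := exists_claims_of_isWitness_min hκ hT hmin
  have h₀ := isDPAssignment_of_claims hind hT.subset_YY hS
  set A := XX G κ \ LL G κ T
  set P₀ := T.biUnion S ∪ A.biUnion fun a => G.neighborFinset a
  set r := (T ∪ A ∪ P₀)ᶜ
  have hroom : ∀ x ∈ r, κ x ≤ #(G.neighborFinset x ∩ r) + #(G.neighborFinset x ∩ P₀) := by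
    intro x hx
    simp only [r, mem_compl, mem_union, not_or] at hx
    obtain ⟨⟨-, hxA⟩, hxP₀⟩ := hx
    have hxL : x ∉ LL G κ T := fun h => hxP₀ (mem_union_left _ (hL h))
    have hstab := add_card_inter_le_deg_of_notMem_LL hκ hT hmin
      (fun h => hxA (mem_sdiff.2 ⟨h, hxL⟩)) hxL
    have hsplit : G.neighborFinset x ⊆
        (G.neighborFinset x ∩ T ∪ G.neighborFinset x ∩ P₀) ∪ G.neighborFinset x ∩ r := by
      intro v hv
      -- the vertices of `A` claim all their neighbours, `x` among them
      have hvA : v ∉ A := fun hvA => hxP₀ (mem_union_right _ (mem_biUnion.2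
        ⟨v, hvA, (G.mem_neighborFinset v x).2 ((G.mem_neighborFinset x v).1 hv).symm⟩))
      simp only [r, mem_union, mem_inter, mem_compl, hv, hvA, true_and, or_false]
      tauto
    have := card_le_card hsplit
    have := card_union_le (G.neighborFinset x ∩ T ∪ G.neighborFinset x ∩ P₀)
      (G.neighborFinset x ∩ r)
    have := card_union_le (G.neighborFinset x ∩ T) (G.neighborFinset x ∩ P₀)
    rw [deg_eq_card_neighborFinset] at hstab
    omega
  obtain ⟨D₁, P₁, own₁, hDP₁, h₁⟩ := exists_isDPAssignment G r
    (fun v => min (κ v) #(G.neighborFinset v ∩ r)) (fun _ _ => min_le_right _ _)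
  rw [← hDP₁] at h₁ hroom
  obtain ⟨own, h⟩ := h₀.extend h₁ (by rw [hDP₁]; exact disjoint_compl_right)
    (fun x hx => hroom x (mem_union_left _ hx))
  refine ⟨_, _, own, ?_, subset_union_left.trans subset_union_left, h⟩
  rw [union_union_union_comm, hDP₁, union_compl]

end Witness

/-- If `M*(G,κ)` fails, i.e. some nonempty `W ⊆ Y^{κ>0}` admits a matching in
`G^aux` from `L(W)` into `W^κ` saturating `L(W)`, then there is a DP-Nash
subgraph whose `D`-set contains a vertex of `Y` (hence differs from `X ∪ Z`). -/
theorem stmt7 (G : SimpleGraph V) (κ : V → ℕ) (hκ : ∀ v, κ v ≤ deg G v)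
    (hind : ∀ u ∈ XX G κ ∪ ZZ G κ, ∀ v ∈ XX G κ ∪ ZZ G κ, ¬ G.Adj u v)
    (W : Finset V) (hWne : W.Nonempty) (hWsub : W ⊆ Ypos G κ)
    (f : V → V × ℕ) (hinj : Set.InjOn f ↑(LL G κ W))
    (hf : ∀ x ∈ LL G κ W, (f x).1 ∈ W ∧ G.Adj x (f x).1 ∧ (f x).2 < κ (f x).1) :
    ∃ (D P : Finset V) (H : SimpleGraph V),
      IsDPNash G κ D P H ∧ (∃ y ∈ YY G κ, y ∈ D) ∧ D ≠ XX G κ ∪ ZZ G κ := by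
  obtain ⟨T, hT, hmin⟩ := exists_min_image ({W | IsWitness G κ W} : Finset (Finset V)) card
    ⟨W, mem_filter.2 ⟨mem_univ _, hWne, hWsub, f, hinj, hf⟩⟩
  replace hT : IsWitness G κ T := (mem_filter.1 hT).2
  obtain ⟨D, P, own, hDP, hTD, h⟩ := exists_isDPAssignment_of_isWitness_min hκ hind hT
    fun W' hW' => hmin W' (mem_filter.2 ⟨mem_univ _, hW'⟩)
  obtain ⟨y, hy⟩ := hT.1
  have hyY := hT.subset_YY hy
  refine ⟨D, P, claimGraph D own, h.isDPNash hDP, ⟨y, hyY, hTD hy⟩, fun hD => ?_⟩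
  exact notMem_XX_union_ZZ_of_mem_YY hyY (hD ▸ hTD hy)
end
end

section
/- Let (G,κ) be a capacitated graph with κ(x) ≤ d_G(x) for all x, with Z = ∅ and X ∪ Z = X independent. If for every x ∈ X the auxiliary bipartite graph G^aux − x admits a matching saturating the side Y' = Y^κ, then (G,κ) has exactly one DP-Nash subgraph, namely (X, Y; E') where E' consists of all edges of G between X and Y. -/
open Finset
open scoped Classical

noncomputable section

variable {V : Type*} [Fintype V]

section Degree

variable {H G : SimpleGraph V} {x v : V}

lemma deg_pos_of_adj (h : H.Adj x v) : 0 < deg H x :=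
  Finset.card_pos.2 ⟨v, by simpa using h⟩

lemma exists_adj_of_deg_pos (h : 0 < deg H x) : ∃ v, H.Adj x v := by
  obtain ⟨v, hv⟩ := Finset.card_pos.1 h
  exact ⟨v, by simpa using hv⟩

lemma deg_congr (h : ∀ v, H.Adj x v ↔ G.Adj x v) : deg H x = deg G x := by
  unfold deg
  congr 1
  exact Finset.filter_congr fun v _ => h v

lemma adj_of_deg_eq (hle : H ≤ G) (hdeg : deg H x = deg G x) (h : G.Adj x v) : H.Adj x v := by
  have hsub : (univ.filter fun w => H.Adj x w) ⊆ univ.filter fun w => G.Adj x w := by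
    intro w
    simpa using fun hw => hle hw
  have heq := Finset.eq_of_subset_of_card_le hsub hdeg.ge
  have hv : v ∈ univ.filter fun w => G.Adj x w := by simpa using h
  simpa [← heq] using hv

lemma card_le_sum_deg {B C : Finset V} (hB : ∀ x ∈ B, ∃ y ∈ C, H.Adj x y) :
    #B ≤ ∑ y ∈ C, deg H y := by
  refine le_trans (Finset.card_le_card ?_) Finset.card_biUnion_le
  intro x hx
  obtain ⟨y, hy, hxy⟩ := hB x hx
  exact Finset.mem_biUnion.2 ⟨y, hy, by simpa using hxy.symm⟩

end Degree

lemma sum_le_card_of_injOn_copies {α β : Type*} {C : Finset α} {S : Finset β} {κ : α → ℕ}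
    {f : α × ℕ → β} (hinj : Set.InjOn f {p | p.1 ∈ C ∧ p.2 < κ p.1})
    (hmaps : ∀ y ∈ C, ∀ i < κ y, f (y, i) ∈ S) :
    ∑ y ∈ C, κ y ≤ #S := by
  have hcopies : ∑ y ∈ C, κ y = #(C.sigma fun y => range (κ y)) := by simp
  rw [hcopies]
  refine Finset.card_le_card_of_injOn (fun σ => f (σ.1, σ.2)) ?_ ?_
  · intro σ hσ
    simp only [Finset.coe_sigma, Set.mem_sigma_iff, Finset.mem_coe, Finset.mem_range] at hσ
    exact hmaps σ.1 hσ.1 σ.2 hσ.2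
  · intro a ha b hb hab
    simp only [Finset.coe_sigma, Set.mem_sigma_iff, Finset.mem_coe, Finset.mem_range] at ha hb
    have h := hinj ha hb hab
    exact Sigma.ext (congrArg Prod.fst h) (heq_of_eq (congrArg Prod.snd h))

section Partition

variable {G : SimpleGraph V} {κ : V → ℕ}

lemma mem_XX_or_mem_YY (hZ : ZZ G κ = ∅) (v : V) : v ∈ XX G κ ∨ v ∈ YY G κ := by
  by_contra hv
  have hvZ : v ∈ ZZ G κ := by simpa [ZZ] using hv
  simp [hZ] at hvZ

lemma disjoint_XX_YY : Disjoint (XX G κ) (YY G κ) :=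
  Finset.disjoint_left.2 fun _ hX hY => (Finset.mem_filter.1 hY).2.1 hX

lemma exists_adj_of_mem_YY {y : V} (hy : y ∈ YY G κ) : ∃ x ∈ XX G κ, G.Adj x y :=
  (Finset.mem_filter.1 hy).2.2

lemma mem_YY_of_adj (hind : ∀ u ∈ XX G κ, ∀ v ∈ XX G κ, ¬ G.Adj u v) {x v : V}
    (hx : x ∈ XX G κ) (h : G.Adj x v) : v ∈ YY G κ := by
  simpa [YY] using ⟨fun hv => hind x hx v hv h, x, hx, h⟩

lemma XX_union_YY (hZ : ZZ G κ = ∅) : XX G κ ∪ YY G κ = univ :=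
  Finset.eq_univ_of_forall fun v => Finset.mem_union.2 (mem_XX_or_mem_YY hZ v)

end Partition

namespace IsDPNash

variable {G H : SimpleGraph V} {κ : V → ℕ} {D P : Finset V}

lemma mem_D_or_mem_P (h : IsDPNash G κ D P H) (v : V) : v ∈ D ∨ v ∈ P :=
  Finset.mem_union.1 (h.2.1 ▸ Finset.mem_univ v)

lemma adj_of_mem_XX (h : IsDPNash G κ D P H) {x v : V} (hx : x ∈ XX G κ) (hxD : x ∈ D)
    (hxv : G.Adj x v) : H.Adj x v := by
  have hκx : κ x = deg G x := (Finset.mem_filter.1 hx).2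
  refine adj_of_deg_eq h.1 ?_ hxv
  rw [h.2.2.2.2.2 x hxD, hκx, min_self]

lemma mem_P_of_adj_of_mem_XX (h : IsDPNash G κ D P H) {x v : V} (hx : x ∈ XX G κ)
    (hxD : x ∈ D) (hxv : G.Adj x v) : v ∈ P := by
  rcases h.2.2.2.1 (h.adj_of_mem_XX hx hxD hxv) with ⟨_, hvP⟩ | ⟨hxP, _⟩
  · exact hvP
  · exact absurd hxP (Finset.disjoint_left.1 h.2.2.1 hxD)

/-- Every vertex of `X ∩ P` has an `H`-neighbour in `Y ∩ D`, so `#(X ∩ P) ≤ ∑_{y ∈ Y ∩ D} κ y`;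
but the matching avoiding `x₀` embeds the copies of `Y ∩ D` into `(X ∩ P) \ {x₀}`, because a
matched vertex lying in `D` would force its neighbour `y` into `P`. -/
lemma notMem_P_of_mem_XX (h : IsDPNash G κ D P H)
    (hind : ∀ u ∈ XX G κ, ∀ v ∈ XX G κ, ¬ G.Adj u v) {x₀ : V} (hx₀ : x₀ ∈ XX G κ)
    {f : V × ℕ → V} (hfinj : Set.InjOn f {p : V × ℕ | p.1 ∈ YY G κ ∧ p.2 < κ p.1})
    (hf : ∀ p : V × ℕ, p.1 ∈ YY G κ → p.2 < κ p.1 →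
      f p ∈ XX G κ ∧ f p ≠ x₀ ∧ G.Adj p.1 (f p)) :
    x₀ ∉ P := by
  intro hx₀P
  have ⟨hle, _, hdisj, hbip, hPdeg, hDdeg⟩ := h
  set B := XX G κ ∩ P
  set C := YY G κ ∩ D
  have hBC : ∀ x ∈ B, ∃ y ∈ C, H.Adj x y := by
    intro x hxB
    obtain ⟨hxX, hxP⟩ := Finset.mem_inter.1 hxB
    obtain ⟨y, hxy⟩ := exists_adj_of_deg_pos (hPdeg x hxP)
    have hyD : y ∈ D := by
      rcases hbip hxy with ⟨hxD, _⟩ | ⟨_, hyD⟩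
      · exact absurd hxP (Finset.disjoint_left.1 hdisj hxD)
      · exact hyD
    exact ⟨y, Finset.mem_inter.2 ⟨mem_YY_of_adj hind hxX (hle hxy), hyD⟩, hxy⟩
  have hmaps : ∀ y ∈ C, ∀ i < κ y, f (y, i) ∈ B.erase x₀ := by
    intro y hyC i hi
    obtain ⟨hyY, hyD⟩ := Finset.mem_inter.1 hyC
    obtain ⟨hfX, hfne, hfadj⟩ := hf (y, i) hyY hi
    have hfP : f (y, i) ∈ P := by
      refine (h.mem_D_or_mem_P _).resolve_left fun hfD => ?_
      exact Finset.disjoint_left.1 hdisj hyD (h.mem_P_of_adj_of_mem_XX hfX hfD hfadj.symm)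
    exact Finset.mem_erase.2 ⟨hfne, Finset.mem_inter.2 ⟨hfX, hfP⟩⟩
  have hinjC : Set.InjOn f {p : V × ℕ | p.1 ∈ C ∧ p.2 < κ p.1} :=
    hfinj.mono fun _ hp => And.intro (Finset.mem_inter.1 hp.1).1 hp.2
  refine lt_irrefl #B ?_
  calc
    #B ≤ ∑ y ∈ C, deg H y := card_le_sum_deg hBC
    _ ≤ ∑ y ∈ C, κ y :=
      Finset.sum_le_sum fun y hy => (hDdeg y (Finset.mem_inter.1 hy).2).trans_le (min_le_right _ _)
    _ ≤ #(B.erase x₀) := sum_le_card_of_injOn_copies hinjC hmaps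
    _ < #B := Finset.card_erase_lt_of_mem (Finset.mem_inter.2 ⟨hx₀, hx₀P⟩)

lemma XX_subset (h : IsDPNash G κ D P H)
    (hind : ∀ u ∈ XX G κ, ∀ v ∈ XX G κ, ¬ G.Adj u v)
    (hmatch : ∀ x ∈ XX G κ, ∃ f : V × ℕ → V,
      Set.InjOn f {p : V × ℕ | p.1 ∈ YY G κ ∧ p.2 < κ p.1} ∧
      ∀ p : V × ℕ, p.1 ∈ YY G κ → p.2 < κ p.1 →
        f p ∈ XX G κ ∧ f p ≠ x ∧ G.Adj p.1 (f p)) :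
    XX G κ ⊆ D := by
  intro x hx
  obtain ⟨f, hfinj, hf⟩ := hmatch x hx
  exact (h.mem_D_or_mem_P x).resolve_right (h.notMem_P_of_mem_XX hind hx hfinj hf)

lemma eq_XX_and_eq_YY (h : IsDPNash G κ D P H) (hZ : ZZ G κ = ∅) (hXD : XX G κ ⊆ D) :
    D = XX G κ ∧ P = YY G κ := by
  have hdisj := h.2.2.1
  have hYP : YY G κ ⊆ P := by
    intro y hy
    obtain ⟨x, hx, hxy⟩ := exists_adj_of_mem_YY hy
    exact h.mem_P_of_adj_of_mem_XX hx (hXD hx) hxy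
  refine ⟨Finset.Subset.antisymm (fun v hvD => ?_) hXD,
    Finset.Subset.antisymm (fun v hvP => ?_) hYP⟩
  · exact (mem_XX_or_mem_YY hZ v).resolve_right
      fun hvY => Finset.disjoint_left.1 hdisj hvD (hYP hvY)
  · exact (mem_XX_or_mem_YY hZ v).resolve_left
      fun hvX => Finset.disjoint_left.1 hdisj (hXD hvX) hvP

lemma adj_iff (h : IsDPNash G κ (XX G κ) (YY G κ) H) (u v : V) :
    H.Adj u v ↔ G.Adj u v ∧
      ((u ∈ XX G κ ∧ v ∈ YY G κ) ∨ (u ∈ YY G κ ∧ v ∈ XX G κ)) := by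
  refine ⟨fun huv => ⟨h.1 huv, h.2.2.2.1 huv⟩, ?_⟩
  rintro ⟨huv, ⟨hu, -⟩ | ⟨-, hv⟩⟩
  · exact h.adj_of_mem_XX hu hu huv
  · exact (h.adj_of_mem_XX hv hv huv.symm).symm

end IsDPNash

lemma isDPNash_XX_YY {G H₀ : SimpleGraph V} {κ : V → ℕ} (hZ : ZZ G κ = ∅)
    (hind : ∀ u ∈ XX G κ, ∀ v ∈ XX G κ, ¬ G.Adj u v)
    (hH₀ : ∀ u v, H₀.Adj u v ↔ G.Adj u v ∧
      ((u ∈ XX G κ ∧ v ∈ YY G κ) ∨ (u ∈ YY G κ ∧ v ∈ XX G κ))) :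
    IsDPNash G κ (XX G κ) (YY G κ) H₀ := by
  refine ⟨fun u v huv => ((hH₀ u v).1 huv).1, XX_union_YY hZ, disjoint_XX_YY,
    fun u v huv => ((hH₀ u v).1 huv).2, fun y hy => ?_, fun x hx => ?_⟩
  · obtain ⟨x, hx, hxy⟩ := exists_adj_of_mem_YY hy
    exact deg_pos_of_adj ((hH₀ y x).2 ⟨hxy.symm, Or.inr ⟨hy, hx⟩⟩)
  · have hκx : κ x = deg G x := (Finset.mem_filter.1 hx).2
    have hdeg : deg H₀ x = deg G x :=
      deg_congr fun v => (hH₀ x v).trans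
        ⟨And.left, fun hxv => ⟨hxv, Or.inl ⟨hx, mem_YY_of_adj hind hx hxv⟩⟩⟩
    rw [hdeg, hκx, min_self]

theorem stmt12_general (G : SimpleGraph V) (κ : V → ℕ)
    (hZ : ZZ G κ = ∅)
    (hind : ∀ u ∈ XX G κ, ∀ v ∈ XX G κ, ¬ G.Adj u v)
    (hmatch : ∀ x ∈ XX G κ, ∃ f : V × ℕ → V,
      Set.InjOn f {p : V × ℕ | p.1 ∈ YY G κ ∧ p.2 < κ p.1} ∧
      ∀ p : V × ℕ, p.1 ∈ YY G κ → p.2 < κ p.1 →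
        f p ∈ XX G κ ∧ f p ≠ x ∧ G.Adj p.1 (f p))
    (H₀ : SimpleGraph V)
    (hH₀ : ∀ u v, H₀.Adj u v ↔ G.Adj u v ∧
      ((u ∈ XX G κ ∧ v ∈ YY G κ) ∨ (u ∈ YY G κ ∧ v ∈ XX G κ))) :
    IsDPNash G κ (XX G κ) (YY G κ) H₀ ∧
      ∀ (D P : Finset V) (H : SimpleGraph V),
        IsDPNash G κ D P H → D = XX G κ ∧ P = YY G κ ∧ H = H₀ := by
  refine ⟨isDPNash_XX_YY hZ hind hH₀, fun D P H h => ?_⟩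
  obtain ⟨rfl, rfl⟩ := h.eq_XX_and_eq_YY hZ (h.XX_subset hind hmatch)
  refine ⟨rfl, rfl, ?_⟩
  ext u v
  exact (h.adj_iff u v).trans (hH₀ u v).symm

/-- If `Z = ∅`, `X` is independent and for every `x ∈ X` the auxiliary graph
`G^aux - x` has a matching saturating `Y^κ`, then `(G,κ)` has exactly one
DP-Nash subgraph, namely `(X, Y; E')` where `E'` is all edges of `G` between
`X` and `Y`. -/
theorem stmt12 (G : SimpleGraph V) (κ : V → ℕ) (hκ : ∀ v, κ v ≤ deg G v)
    (hedge : ∀ u v, G.Adj u v → 0 < κ u ∨ 0 < κ v)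
    (hZ : ZZ G κ = ∅)
    (hind : ∀ u ∈ XX G κ, ∀ v ∈ XX G κ, ¬ G.Adj u v)
    (hmatch : ∀ x ∈ XX G κ, ∃ f : V × ℕ → V,
      Set.InjOn f {p : V × ℕ | p.1 ∈ YY G κ ∧ p.2 < κ p.1} ∧
      ∀ p : V × ℕ, p.1 ∈ YY G κ → p.2 < κ p.1 →
        f p ∈ XX G κ ∧ f p ≠ x ∧ G.Adj p.1 (f p))
    (H₀ : SimpleGraph V)
    (hH₀ : ∀ u v, H₀.Adj u v ↔ G.Adj u v ∧
      ((u ∈ XX G κ ∧ v ∈ YY G κ) ∨ (u ∈ YY G κ ∧ v ∈ XX G κ))) :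
    IsDPNash G κ (XX G κ) (YY G κ) H₀ ∧
      ∀ (D P : Finset V) (H : SimpleGraph V),
        IsDPNash G κ D P H → D = XX G κ ∧ P = YY G κ ∧ H = H₀ :=
  stmt12_general G κ hZ hind hmatch H₀ hH₀
end
end
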